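/- For an $n\geq 2$ dimensional setting with $\mathrm{trace}(\dot{\alpha}(0))=\frac{\mathrm{scal}^g}{n-1}$, the mean curvature vector field of the immersion $\Psi^u$ satisfies $\mathbf{H}^u=-\frac{\mathrm{scal}^{e^{2u}g}}{2n(n-1)}\,\xi^u+\eta^u$, and consequently $\widetilde{g}(\mathbf{H}^u,\mathbf{H}^u)=\frac{\mathrm{scal}^{e^{2u}g}}{n(n-1)}$. -/
import Mathlib


/-- In the `n ≥ 2` dimensional ambient setting with
`trace(α̇(0)) = scal^g/(n-1)`, the mean curvature vector of `Ψ^u` satisfies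
`H^u = -(scal^{e^{2u}g}/(2n(n-1))) ξ^u + η^u`, and consequently
`g̃(H^u, H^u) = scal^{e^{2u}g}/(n(n-1))`.  The general mean curvature formula
`H^u = (e^{-2u}/n)(Δ^g u - (trace α̇(0) - (n-2)‖∇^g u‖²)/2) ξ^u + η^u`, the conformal
law for the scalar curvature, and the lightlike frame relations
`g̃(ξ^u,ξ^u) = g̃(η^u,η^u) = 0`, `g̃(ξ^u,η^u) = -1` are hypotheses. -/
theorem statement_17 {M : Type*} (n : ℕ) (hn : 2 ≤ n)
    (Va : Type*) [AddCommGroup Va] [Module (M → ℝ) Va]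
    (gA : Va → Va → M → ℝ)
    (hgA_symm : ∀ X Y, gA X Y = gA Y X)
    (hgA_add : ∀ X Y U, gA (X + Y) U = gA X U + gA Y U)
    (hgA_smul : ∀ (f : M → ℝ) X U, gA (f • X) U = f * gA X U)
    -- data on (M, g): scalar curvatures, Laplacian, squared gradient norm, trace(α̇(0))
    (scal : (M → ℝ) → M → ℝ) (lap : (M → ℝ) → M → ℝ)
    (normSq : (M → ℝ) → M → ℝ) (tra : M → ℝ)
    (hscal : ∀ u, scal u = fun x =>
      Real.exp (-2 * u x) *
        (scal 0 x - 2 * ((n : ℝ) - 1) * lap u x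
          - ((n : ℝ) - 1) * ((n : ℝ) - 2) * normSq u x))
    (htra : tra = fun x => scal 0 x / ((n : ℝ) - 1))
    -- the lightlike normal frame along Ψ^u and the mean curvature vector H^u
    (ξ η H : (M → ℝ) → Va)
    (hξξ : ∀ u, gA (ξ u) (ξ u) = 0)
    (hηη : ∀ u, gA (η u) (η u) = 0)
    (hξη : ∀ u, gA (ξ u) (η u) = fun _ => (-1 : ℝ))
    -- the general formula for the mean curvature vector of Ψ^u
    (hH : ∀ u, H u = (fun x => Real.exp (-2 * u x) / (n : ℝ) *
        (lap u x - (tra x - ((n : ℝ) - 2) * normSq u x) / 2)) • ξ u + η u) :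
    ∀ u, H u = (fun x => -(scal u x) / (2 * (n : ℝ) * ((n : ℝ) - 1))) • ξ u + η u ∧
      gA (H u) (H u) = fun x => scal u x / ((n : ℝ) * ((n : ℝ) - 1)) := by
  intro u
  have hn0 : (n : ℝ) ≠ 0 := by positivity
  have hn1 : (n : ℝ) - 1 ≠ 0 := by
    have : (2 : ℝ) ≤ (n : ℝ) := by exact_mod_cast hn
    linarith
  have hcoef : (fun x => Real.exp (-2 * u x) / (n : ℝ) *
      (lap u x - (tra x - ((n : ℝ) - 2) * normSq u x) / 2)) =
      (fun x => -(scal u x) / (2 * (n : ℝ) * ((n : ℝ) - 1))) := by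
    funext x
    rw [hscal u, htra]
    field_simp
    ring
  have h1 : H u = (fun x => -(scal u x) / (2 * (n : ℝ) * ((n : ℝ) - 1))) • ξ u + η u := by
    rw [hH u, hcoef]
  refine ⟨h1, ?_⟩
  set f : M → ℝ := fun x => -(scal u x) / (2 * (n : ℝ) * ((n : ℝ) - 1)) with hf
  rw [h1, hgA_add, hgA_smul, hgA_symm (ξ u), hgA_symm (η u), hgA_add, hgA_add,
    hgA_smul, hgA_smul, hξξ u, hηη u, hξη u, hgA_symm (η u) (ξ u), hξη u]
  funext x
  simp only [Pi.add_apply, Pi.mul_apply, Pi.zero_apply, mul_zero, add_zero, zero_add, hf]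
  field_simp
  ring
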